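/- T_{k+1} is a contiguous subsection of L_{k+1}: for every k, if i₁, i₂ ∈ T_{k+1} and i ∈ L_{k+1} with i₁ < i < i₂, then i ∈ T_{k+1}. -/

import Mathlib

/-!
Inserting `x` raises each level by at most one, an index `j ∈ S` can only be promoted if
`x << j`, and along a level set the values decrease as the indices increase; hence `i ∈ L_{k+1}`
lies in `T_{k+1}` as soon as some `w ∈ T_k` satisfies `w << i`. Induct on `k`. The predecessor
`a ∈ T_k` of `i₂` on a longest chain is such a `w` if `a < i`. Otherwise `i < a`, and the
predecessor `b ∈ T_k` of `i₁` is such a `w` unless `f i ≤ f b`; in that case `b ∈ L_k` lies to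
the left of every predecessor `p ∈ L_k` of `i`, so `b < p < a` and `p ∈ T_k` by induction.
-/

/-- `c` is an increasing subsequence of `(S, f)`: a list of indices, all in `S`,
strictly increasing in index and strictly increasing in value. -/
def IsIncrSubseq (S : Finset ℕ) (f : ℕ → ℝ) (c : List ℕ) : Prop :=
  (∀ a ∈ c, a ∈ S) ∧ c.Chain' (· < ·) ∧ c.Chain' (fun a b => f a < f b)

/-- `lvl S f i` is the maximum length of an increasing subsequence of `(S, f)` ending at `i`. -/
noncomputable def lvl (S : Finset ℕ) (f : ℕ → ℝ) (i : ℕ) : ℕ :=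
  sSup {m | ∃ c : List ℕ, IsIncrSubseq S f c ∧ c.getLast? = some i ∧ c.length = m}

/-- The level set `L_k = {i ∈ S : lvl S f i = k}`. -/
def levelSet (S : Finset ℕ) (f : ℕ → ℝ) (k : ℕ) : Set ℕ :=
  {i | i ∈ S ∧ lvl S f i = k}

/-- The promoted set `T_k`: indices of `S' = S ∪ {x}` whose post-insertion level is `k + 1`
and which are either the inserted index `x` or had pre-insertion level `k`. -/
def promoted (S : Finset ℕ) (f : ℕ → ℝ) (x : ℕ) (k : ℕ) : Set ℕ :=
  {i | i ∈ insert x S ∧ lvl (insert x S) f i = k + 1 ∧ (i = x ∨ lvl S f i = k)}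

namespace IsIncrSubseq

variable {S : Finset ℕ} {f : ℕ → ℝ} {c d : List ℕ} {a b x : ℕ}

theorem sublist (h : IsIncrSubseq S f c) (hd : d.Sublist c) : IsIncrSubseq S f d :=
  ⟨fun a ha => h.1 a (hd.subset ha), h.2.1.sublist hd, h.2.2.sublist hd⟩

theorem nodup (h : IsIncrSubseq S f c) : c.Nodup :=
  h.2.1.pairwise.nodup

theorem length_le_card (h : IsIncrSubseq S f c) : c.length ≤ S.card := by
  rw [← List.toFinset_card_of_nodup h.nodup]
  exact Finset.card_le_card fun a ha => h.1 a (List.mem_toFinset.mp ha)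

theorem lt_last_of_mem (h : IsIncrSubseq S f (d ++ [b])) (ha : a ∈ d) : a < b ∧ f a < f b :=
  ⟨(List.pairwise_append.mp h.2.1.pairwise).2.2 a ha b (List.mem_singleton_self b),
    (List.pairwise_append.mp h.2.2.pairwise).2.2 a ha b (List.mem_singleton_self b)⟩

theorem append_singleton (h : IsIncrSubseq S f (d ++ [a])) (hb : b ∈ S) (hab : a < b)
    (hf : f a < f b) : IsIncrSubseq S f (d ++ [a] ++ [b]) := by
  refine ⟨fun y hy => ?_, ?_, ?_⟩
  · rcases List.mem_append.mp hy with hy | hy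
    · exact h.1 y hy
    · exact List.mem_singleton.mp hy ▸ hb
  · exact List.isChain_append.mpr ⟨h.2.1, List.isChain_singleton b, by simp [hab]⟩
  · exact List.isChain_append.mpr ⟨h.2.2, List.isChain_singleton b, by simp [hf]⟩

theorem erase_of_insert (h : IsIncrSubseq (insert x S) f c) : IsIncrSubseq S f (c.erase x) := by
  refine ⟨fun y hy => ?_, (h.sublist List.erase_sublist).2⟩
  obtain ⟨hyx, hyc⟩ := (h.nodup.mem_erase_iff).mp hy
  exact (Finset.mem_insert.mp (h.1 y hyc)).resolve_left hyx

end IsIncrSubseq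

section Level

variable {S : Finset ℕ} {f : ℕ → ℝ} {d : List ℕ} {a b i : ℕ}

theorem length_add_one_le_lvl (h : IsIncrSubseq S f (d ++ [i])) : d.length + 1 ≤ lvl S f i :=
  le_csSup ⟨S.card, fun _ ⟨_, hc, _, hl⟩ => hl ▸ hc.length_le_card⟩
    ⟨d ++ [i], h, List.getLast?_concat, by simp⟩

theorem exists_incrSubseq_length_add_one_eq_lvl (hi : i ∈ S) :
    ∃ d, IsIncrSubseq S f (d ++ [i]) ∧ d.length + 1 = lvl S f i := by
  have hne : {m | ∃ c, IsIncrSubseq S f c ∧ c.getLast? = some i ∧ c.length = m}.Nonempty :=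
    ⟨1, [i], ⟨by simpa using hi, List.isChain_singleton i, List.isChain_singleton i⟩, rfl, rfl⟩
  obtain ⟨c, hc, hlast, hlen⟩ :=
    Nat.sSup_mem hne ⟨S.card, fun _ ⟨_, hc, _, hl⟩ => hl ▸ hc.length_le_card⟩
  obtain ⟨d, rfl⟩ := List.getLast?_eq_some_iff.mp hlast
  exact ⟨d, hc, by simpa [lvl] using hlen⟩

theorem one_le_lvl (hi : i ∈ S) : 1 ≤ lvl S f i := by
  obtain ⟨d, -, hd⟩ := exists_incrSubseq_length_add_one_eq_lvl (f := f) hi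
  omega

theorem lvl_lt_lvl (ha : a ∈ S) (hb : b ∈ S) (hab : a < b) (hf : f a < f b) :
    lvl S f a < lvl S f b := by
  obtain ⟨d, hd, hlen⟩ := exists_incrSubseq_length_add_one_eq_lvl (f := f) ha
  have := length_add_one_le_lvl (hd.append_singleton hb hab hf)
  simp only [List.length_append, List.length_singleton] at this
  omega

theorem le_of_lvl_eq (ha : a ∈ S) (hb : b ∈ S) (hab : a ≤ b) (h : lvl S f a = lvl S f b) :
    f b ≤ f a := by
  rcases hab.eq_or_lt with rfl | hab
  · exact le_rfl
  · exact not_lt.mp fun hf => (lvl_lt_lvl ha hb hab hf).ne h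

theorem exists_pred_of_two_le_lvl (hi : i ∈ S) (h : 2 ≤ lvl S f i) :
    ∃ a ∈ S, a < i ∧ f a < f i ∧ lvl S f a + 1 = lvl S f i := by
  obtain ⟨d, hd, hlen⟩ := exists_incrSubseq_length_add_one_eq_lvl (f := f) hi
  rcases List.eq_nil_or_concat d with rfl | ⟨d', a, rfl⟩
  · simp only [List.length_nil] at hlen; omega
  simp only [List.concat_eq_append] at hd hlen
  have hd' : IsIncrSubseq S f (d' ++ [a]) := hd.sublist (List.sublist_append_left _ _)
  have haS : a ∈ S := hd'.1 a (by simp)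
  obtain ⟨hai, hfa⟩ := hd.lt_last_of_mem (a := a) (by simp)
  have h₁ := length_add_one_le_lvl hd'
  have h₂ := lvl_lt_lvl haS hi hai hfa
  simp only [List.length_append, List.length_singleton] at hlen
  exact ⟨a, haS, hai, hfa, by omega⟩

end Level

section Insertion

variable {S : Finset ℕ} {f : ℕ → ℝ} {x i j k m w : ℕ}

theorem lvl_insert_le_succ (hx : x ∉ S) (hi : i ∈ S) : lvl (insert x S) f i ≤ lvl S f i + 1 := by
  obtain ⟨d, hd, hlen⟩ :=
    exists_incrSubseq_length_add_one_eq_lvl (f := f) (Finset.mem_insert_of_mem (b := x) hi)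
  have hix : i ≠ x := fun h => hx (h ▸ hi)
  have herase : (d ++ [i]).erase x = d.erase x ++ [i] := by
    rw [List.erase_append]
    split_ifs with hxd
    · rfl
    · simp [List.erase_of_not_mem hxd, hix]
  have := length_add_one_le_lvl (herase ▸ hd.erase_of_insert)
  rw [List.length_erase] at this
  split_ifs at this <;> omega

theorem lt_of_lvl_lt_lvl_insert (hx : x ∉ S) (hi : i ∈ S)
    (h : lvl S f i < lvl (insert x S) f i) : x < i ∧ f x < f i := by
  obtain ⟨d, hd, hlen⟩ :=
    exists_incrSubseq_length_add_one_eq_lvl (f := f) (Finset.mem_insert_of_mem (b := x) hi)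
  refine hd.lt_last_of_mem (by_contra fun hxd => ?_)
  have hxi : x ∉ d ++ [i] := by
    simp only [List.mem_append, List.mem_singleton, not_or]
    exact ⟨hxd, by rintro rfl; exact hx hi⟩
  have := length_add_one_le_lvl (List.erase_of_not_mem hxi ▸ hd.erase_of_insert)
  omega

theorem mem_levelSet_of_mem_promoted (hj : j ∈ promoted S f x m) (hjx : j ≠ x) :
    j ∈ levelSet S f m :=
  ⟨(Finset.mem_insert.mp hj.1).resolve_left hjx, hj.2.2.resolve_left hjx⟩

theorem lt_of_mem_promoted (hx : x ∉ S) (hj : j ∈ promoted S f x m) (hjx : j ≠ x) :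
    x < j ∧ f x < f j := by
  obtain ⟨hjS, hjl⟩ := mem_levelSet_of_mem_promoted hj hjx
  exact lt_of_lvl_lt_lvl_insert hx hjS (by rw [hj.2.1, hjl]; omega)

theorem mem_promoted_succ_of_lt (hx : x ∉ S) (hw : w ∈ promoted S f x k) (hwi : w < i)
    (hf : f w < f i) (hi : i ∈ levelSet S f (k + 1)) : i ∈ promoted S f x (k + 1) := by
  have hiS' := Finset.mem_insert_of_mem (b := x) hi.1
  have h₁ := lvl_lt_lvl hw.1 hiS' hwi hf
  have h₂ := lvl_insert_le_succ (f := f) hx hi.1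
  exact ⟨hiS', by rw [hi.2] at h₂; rw [hw.2.1] at h₁; omega, Or.inr hi.2⟩

theorem exists_mem_promoted_pred (hx : x ∉ S) (hj : j ∈ promoted S f x (m + 1)) (hjx : j ≠ x) :
    ∃ a ∈ promoted S f x m, a < j ∧ f a < f j := by
  obtain ⟨hjS, hjl⟩ := mem_levelSet_of_mem_promoted hj hjx
  obtain ⟨a, haS', haj, hfa, hla⟩ := exists_pred_of_two_le_lvl hj.1 (by rw [hj.2.1]; omega)
  rw [hj.2.1] at hla
  refine ⟨a, ⟨haS', by omega, ?_⟩, haj, hfa⟩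
  rcases Finset.mem_insert.mp haS' with rfl | haS
  · exact Or.inl rfl
  · have h₁ := lvl_lt_lvl haS hjS haj hfa
    have h₂ := lvl_insert_le_succ (f := f) hx haS
    exact Or.inr (by omega)

end Insertion

def PromotedContiguous (S : Finset ℕ) (f : ℕ → ℝ) (x k : ℕ) : Prop :=
  ∀ i₁ i₂ i, i₁ ∈ promoted S f x k → i₂ ∈ promoted S f x k → i ∈ levelSet S f k →
    i₁ < i → i < i₂ → i ∈ promoted S f x k

theorem PromotedContiguous.succ {S : Finset ℕ} {f : ℕ → ℝ} {x k : ℕ} (hx : x ∉ S)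
    (ih : PromotedContiguous S f x k) : PromotedContiguous S f x (k + 1) := by
  intro i₁ i₂ i h₁ h₂ hi h₁i hi₂
  have hxi : x < i := by
    rcases eq_or_ne i₁ x with rfl | h₁x
    · exact h₁i
    · exact (lt_of_mem_promoted hx h₁ h₁x).1.trans h₁i
  have hL₂ := mem_levelSet_of_mem_promoted h₂ (by omega)
  have hfi₂ : f i₂ ≤ f i := le_of_lvl_eq hi.1 hL₂.1 hi₂.le (hi.2.trans hL₂.2.symm)
  obtain ⟨a, ha, hai₂, hfa⟩ := exists_mem_promoted_pred hx h₂ (by omega)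
  rcases lt_or_gt_of_ne (show a ≠ i by rintro rfl; linarith) with hai | hia
  · exact mem_promoted_succ_of_lt hx ha hai (by linarith) hi
  have hax : a ≠ x := by omega
  have haL := mem_levelSet_of_mem_promoted ha hax
  have hxa := lt_of_mem_promoted hx ha hax
  have h₁x : i₁ ≠ x := by
    rintro rfl
    have := lvl_lt_lvl (Finset.mem_insert_self i₁ S) ha.1 hxa.1 hxa.2
    rw [h₁.2.1, ha.2.1] at this
    omega
  obtain ⟨b, hb, hbi₁, hfb⟩ := exists_mem_promoted_pred hx h₁ h₁x
  by_cases hfbi : f b < f i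
  · exact mem_promoted_succ_of_lt hx hb (hbi₁.trans h₁i) hfbi hi
  have hbL := mem_levelSet_of_mem_promoted hb (by rintro rfl; linarith)
  have hk : 1 ≤ k := haL.2 ▸ one_le_lvl haL.1
  obtain ⟨p, hpS, hpi, hfp, hlp⟩ := exists_pred_of_two_le_lvl (f := f) hi.1 (by rw [hi.2]; omega)
  have hpL : p ∈ levelSet S f k := ⟨hpS, by rw [hi.2] at hlp; omega⟩
  have hbp : b < p := lt_of_not_ge fun hpb =>
    hfbi ((le_of_lvl_eq hpS hbL.1 hpb (hpL.2.trans hbL.2.symm)).trans_lt hfp)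
  exact mem_promoted_succ_of_lt hx (ih b a p hb ha hpL hbp (hpi.trans hia)) hpi hfp hi

theorem promotedContiguous {S : Finset ℕ} {f : ℕ → ℝ} {x : ℕ} (hx : x ∉ S) :
    ∀ k, PromotedContiguous S f x k
  | 0 => fun _ _ _ _ _ hi => absurd hi.2 (Nat.one_le_iff_ne_zero.mp (one_le_lvl hi.1))
  | k + 1 => (promotedContiguous hx k).succ hx

/-- `T_{k+1}` is a contiguous subsection of `L_{k+1}`: for every `k`, if
`i₁, i₂ ∈ T_{k+1}` and `i ∈ L_{k+1}` with `i₁ < i < i₂`, then `i ∈ T_{k+1}`. -/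
theorem stmt_8 (S : Finset ℕ) (f : ℕ → ℝ) (x : ℕ) (hx : x ∉ S) (k : ℕ)
    (i₁ i₂ i : ℕ) (h₁ : i₁ ∈ promoted S f x (k + 1)) (h₂ : i₂ ∈ promoted S f x (k + 1))
    (hi : i ∈ levelSet S f (k + 1)) (h₁i : i₁ < i) (hi₂ : i < i₂) :
    i ∈ promoted S f x (k + 1) :=
  promotedContiguous hx (k + 1) i₁ i₂ i h₁ h₂ hi h₁i hi₂
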